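/- Dual certificate implies primal optimality for dual-blind deconvolution (Proposition 1). Let Z_r = Σ_{ℓ=0}^{L−1} α_ℓ · u a(r_ℓ)^H with ‖u‖₂ = 1, nonzero α_ℓ ∈ ℂ and distinct r_ℓ ∈ [0,1)², and let Z_c = Σ_{q=0}^{Q−1} β_q · w a(c_q)^H with ‖w‖₂ = 1, nonzero β_q ∈ ℂ and distinct c_q ∈ [0,1)². Set y = א_r(Z_r) + א_c(Z_c) ∈ ℂ^(MP). Suppose there exists q ∈ ℂ^(MP) such that the vector polynomials f_r(r) = א_r*(q) a(r) ∈ ℂ^J and f_c(c) = א_c*(q) a(c) ∈ ℂ^(PJ) satisfy: (i) f_r(r_ℓ) = sign(α_ℓ) · u for every ℓ; (ii) f_c(c_q) = sign(β_q) · w for every q; (iii) ‖f_r(r)‖₂ < 1 for every r ∈ [0,1)² not among the r_ℓ; (iv) ‖f_c(c)‖₂ < 1 for every c ∈ [0,1)² not among the c_q. Then (Z_r, Z_c) is an optimal solution of the atomic-norm minimization: for every pair (Z_r', Z_c') with Z_r' ∈ ℂ^(J×MP), Z_c' ∈ ℂ^(PJ×MP), finite atomic norms, and א_r(Z_r') +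 א_c(Z_c') = y, one has ‖Z_r‖_A + ‖Z_c‖_A ≤ ‖Z_r'‖_A + ‖Z_c'‖_A. -/

import Mathlib

open scoped BigOperators ComplexConjugate ENNReal Matrix

noncomputable section

namespace DBD

/-- Index set for `ℂ^(MP)` with `M = 2N+1`: pairs `v = (n,p)`,
`n ∈ {-N,…,N}` (encoded via `Fin (2N+1)` shifted by `N`) and `p ∈ {0,…,P-1}`. -/
abbrev Idx (N P : ℕ) := Fin (2 * N + 1) × Fin P

/-- The atom vector `a(r) ∈ ℂ^(MP)` with `[a(r)]_(n,p) = exp(2πi(τ n + ν p))`,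
where the first index encodes `n = v.1 - N ∈ {-N,…,N}`. -/
def atom (N P : ℕ) (r : ℝ × ℝ) : Idx N P → ℂ := fun v =>
  Complex.exp (2 * (Real.pi : ℂ) * Complex.I *
    ((r.1 : ℂ) * (((((v.1 : ℕ) : ℤ) - (N : ℤ)) : ℤ) : ℂ) + (r.2 : ℂ) * ((v.2 : ℕ) : ℂ)))

/-- The parameter domain `[0,1)²`. -/
def box : Set (ℝ × ℝ) := Set.Ico (0 : ℝ) 1 ×ˢ Set.Ico (0 : ℝ) 1

/-- The rank-one atom matrix `u a(r)ᴴ ∈ ℂ^(d×MP)`. -/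
def atomMat (N P : ℕ) {d : ℕ} (u : Fin d → ℂ) (r : ℝ × ℝ) :
    Matrix (Fin d) (Idx N P) ℂ := fun i v => u i * conj (atom N P r v)

/-- Euclidean (ℓ₂) norm on `ℂ^d`. -/
def enorm2 {d : ℕ} (x : Fin d → ℂ) : ℝ := Real.sqrt (∑ i, ‖x i‖ ^ 2)

/-- The atomic norm `‖Z‖_A ∈ [0,∞]`: infimum of `Σ_ℓ |α_ℓ|` over decompositions
`Z = Σ_ℓ α_ℓ · u a(r_ℓ)ᴴ` with a single unit-norm `u` and `r_ℓ ∈ [0,1)²`;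
`+∞` (the infimum over the empty set) if no decomposition exists. -/
def anorm (N P : ℕ) {d : ℕ} (Z : Matrix (Fin d) (Idx N P) ℂ) : ℝ≥0∞ :=
  sInf {x : ℝ≥0∞ | ∃ (L : ℕ) (α : Fin L → ℂ) (rs : Fin L → ℝ × ℝ) (u : Fin d → ℂ),
    enorm2 u = 1 ∧ (∀ ℓ, rs ℓ ∈ box) ∧
    Z = ∑ ℓ, α ℓ • atomMat N P u (rs ℓ) ∧
    x = ENNReal.ofReal (∑ ℓ, ‖α ℓ‖)}

/-- Standard inner product `⟨x,y⟩ = xᴴ y` on `ℂ^(MP)`. -/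
def vinner (N P : ℕ) (x y : Idx N P → ℂ) : ℂ := ∑ v, conj (x v) * y v

/-- Frobenius inner product `⟨A,B⟩ = Tr(Aᴴ B)`. -/
def finner {m n : Type*} [Fintype m] [Fintype n] (A B : Matrix m n ℂ) : ℂ :=
  (Aᴴ * B).trace

/-- `sign(c) = c / |c|` for complex `c`. -/
def csign (c : ℂ) : ℂ := c / (‖c‖ : ℂ)

/-- The trace-form measurement operator `[א(Z)]_v = Tr(G_v Z)`. -/
def aleph (N P : ℕ) {d : ℕ} (G : Idx N P → Matrix (Idx N P) (Fin d) ℂ)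
    (Z : Matrix (Fin d) (Idx N P) ℂ) : Idx N P → ℂ := fun v => (G v * Z).trace

/-- The adjoint operator `א*(q) = Σ_v [q]_v G_vᴴ`. -/
def alephAdj (N P : ℕ) {d : ℕ} (G : Idx N P → Matrix (Idx N P) (Fin d) ℂ)
    (q : Idx N P → ℂ) : Matrix (Fin d) (Idx N P) ℂ := ∑ v, q v • (G v)ᴴ

/-- The dual atomic norm `‖W‖*_A = sup{ ⟨U,W⟩_ℝ : ‖U‖_A ≤ 1 }`. -/
def dualNorm (N P : ℕ) {d : ℕ} (W : Matrix (Fin d) (Idx N P) ℂ) : ℝ :=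
  sSup {x : ℝ | ∃ U : Matrix (Fin d) (Idx N P) ℂ, anorm N P U ≤ 1 ∧ x = (finner U W).re}

end DBD

open DBD

/-! `W = א*(q)` satisfies `‖W a(r)‖₂ ≤ 1` on `[0,1)²`, so by Cauchy–Schwarz every atom pairs with
`W` to modulus at most one and `Re⟨W, Z⟩ ≤ ‖Z‖_A` for every `Z`. The interpolation conditions make
this an equality on the true solution, and the adjoint identity `⟨q, א(Z)⟩ = ⟨א*(q), Z⟩` shows
that the total pairing `⟨q, y⟩` is the same for every feasible pair. Hence
`‖Z_r‖_A + ‖Z_c‖_A ≤ Σ|α_ℓ| + Σ|β_q| = Re⟨q, y⟩ ≤ ‖Z_r'‖_A + ‖Z_c'‖_A`. -/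

namespace DBD

variable {d : ℕ}

lemma enorm2_eq_norm (x : Fin d → ℂ) : enorm2 x = ‖WithLp.toLp 2 x‖ := by
  simp [enorm2, EuclideanSpace.norm_eq]

lemma enorm2_smul (c : ℂ) (x : Fin d → ℂ) : enorm2 (c • x) = ‖c‖ * enorm2 x := by
  rw [enorm2_eq_norm, enorm2_eq_norm, WithLp.toLp_smul, norm_smul]

lemma norm_dotProduct_star_le (x y : Fin d → ℂ) :
    ‖y ⬝ᵥ star x‖ ≤ enorm2 x * enorm2 y := by
  rw [enorm2_eq_norm, enorm2_eq_norm, ← EuclideanSpace.inner_toLp_toLp]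
  exact norm_inner_le_norm _ _

lemma dotProduct_star_self_of_enorm2_eq_one {u : Fin d → ℂ} (hu : enorm2 u = 1) :
    u ⬝ᵥ star u = 1 := by
  rw [← EuclideanSpace.inner_toLp_toLp, inner_self_eq_norm_sq_to_K, ← enorm2_eq_norm, hu]
  norm_num

lemma norm_csign {c : ℂ} (hc : c ≠ 0) : ‖csign c‖ = 1 := by
  simp [csign, hc]

lemma mul_star_csign {c : ℂ} (hc : c ≠ 0) : c * star (csign c) = ‖c‖ := by
  have : (‖c‖ : ℂ) ≠ 0 := by simpa using hc
  rw [csign, star_div₀, Complex.star_def, Complex.conj_ofReal, mul_div_assoc', Complex.mul_conj,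
    Complex.normSq_eq_norm_sq]
  push_cast
  field_simp

lemma finner_sum_smul {m n ι : Type*} [Fintype m] [Fintype n] [Fintype ι]
    (W : Matrix m n ℂ) (c : ι → ℂ) (B : ι → Matrix m n ℂ) :
    finner W (∑ ℓ, c ℓ • B ℓ) = ∑ ℓ, c ℓ * finner W (B ℓ) := by
  simp [finner, Matrix.mul_sum, Matrix.trace_sum, Matrix.mul_smul]

lemma finner_atomMat (N P : ℕ) (W : Matrix (Fin d) (Idx N P) ℂ) (u : Fin d → ℂ)
    (r : ℝ × ℝ) : finner W (atomMat N P u r) = star (W *ᵥ atom N P r ⬝ᵥ star u) := by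
  simp only [finner, Matrix.trace, Matrix.diag_apply, Matrix.mul_apply,
    Matrix.conjTranspose_apply, atomMat, Matrix.mulVec, dotProduct, star_sum, star_mul',
    Finset.sum_mul, Complex.star_def, Pi.star_apply, Complex.conj_conj]
  rw [Finset.sum_comm]
  refine Finset.sum_congr rfl fun i _ => Finset.sum_congr rfl fun v _ => ?_
  ring

lemma vinner_aleph (N P : ℕ) (G : Idx N P → Matrix (Idx N P) (Fin d) ℂ)
    (q : Idx N P → ℂ) (Z : Matrix (Fin d) (Idx N P) ℂ) :
    vinner N P q (aleph N P G Z) = finner (alephAdj N P G q) Z := by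
  simp only [vinner, aleph, finner, alephAdj, Matrix.trace, Matrix.diag_apply,
    Matrix.mul_apply, Matrix.conjTranspose_apply, Matrix.sum_apply, Matrix.smul_apply,
    map_sum, map_mul, Complex.conj_conj, smul_eq_mul, Complex.star_def,
    Finset.mul_sum, Finset.sum_mul]
  rw [Finset.sum_comm]
  refine Finset.sum_congr rfl fun j _ => ?_
  rw [Finset.sum_comm]
  refine Finset.sum_congr rfl fun i _ => Finset.sum_congr rfl fun v _ => ?_
  ring

lemma vinner_add (N P : ℕ) (q a b : Idx N P → ℂ) :
    vinner N P q (fun v => a v + b v) = vinner N P q a + vinner N P q b := by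
  simp [vinner, mul_add, Finset.sum_add_distrib]

variable {N P L : ℕ} {α : Fin L → ℂ} {rs : Fin L → ℝ × ℝ} {u : Fin d → ℂ}

lemma anorm_sum_smul_atomMat_le (hu : enorm2 u = 1) (hrs : ∀ ℓ, rs ℓ ∈ box) :
    anorm N P (∑ ℓ, α ℓ • atomMat N P u (rs ℓ)) ≤ ENNReal.ofReal (∑ ℓ, ‖α ℓ‖) :=
  sInf_le ⟨L, α, rs, u, hu, hrs, rfl, rfl⟩

lemma ofReal_re_finner_le_anorm (W : Matrix (Fin d) (Idx N P) ℂ)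
    (hW : ∀ r ∈ box, enorm2 (W *ᵥ atom N P r) ≤ 1) (Z : Matrix (Fin d) (Idx N P) ℂ) :
    ENNReal.ofReal (finner W Z).re ≤ anorm N P Z := by
  refine le_sInf ?_
  rintro x ⟨L, α, rs, u, hu, hrs, rfl, rfl⟩
  refine ENNReal.ofReal_le_ofReal ?_
  rw [finner_sum_smul, Complex.re_sum]
  refine Finset.sum_le_sum fun ℓ _ => ?_
  have hatom : ‖finner W (atomMat N P u (rs ℓ))‖ ≤ 1 := by
    rw [finner_atomMat, norm_star]
    calc ‖W *ᵥ atom N P (rs ℓ) ⬝ᵥ star u‖ ≤ enorm2 u * enorm2 (W *ᵥ atom N P (rs ℓ)) :=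
          norm_dotProduct_star_le _ _
      _ ≤ 1 := by rw [hu, one_mul]; exact hW _ (hrs ℓ)
  calc (α ℓ * finner W (atomMat N P u (rs ℓ))).re
      ≤ ‖α ℓ‖ * ‖finner W (atomMat N P u (rs ℓ))‖ := (Complex.re_le_norm _).trans (norm_mul _ _).le
    _ ≤ ‖α ℓ‖ := mul_le_of_le_one_right (norm_nonneg _) hatom

variable {W : Matrix (Fin d) (Idx N P) ℂ}

lemma finner_eq_sum_norm_of_interp (hu : enorm2 u = 1) (hα : ∀ ℓ, α ℓ ≠ 0)
    (hinterp : ∀ ℓ, W *ᵥ atom N P (rs ℓ) = csign (α ℓ) • u) :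
    finner W (∑ ℓ, α ℓ • atomMat N P u (rs ℓ)) = ((∑ ℓ, ‖α ℓ‖ : ℝ) : ℂ) := by
  rw [finner_sum_smul]
  push_cast
  refine Finset.sum_congr rfl fun ℓ _ => ?_
  rw [finner_atomMat, hinterp, smul_dotProduct, dotProduct_star_self_of_enorm2_eq_one hu,
    smul_eq_mul, mul_one, mul_star_csign (hα ℓ)]

lemma enorm2_mulVec_atom_le_one_of_interp (hu : enorm2 u = 1) (hα : ∀ ℓ, α ℓ ≠ 0)
    (hinterp : ∀ ℓ, W *ᵥ atom N P (rs ℓ) = csign (α ℓ) • u)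
    (hbound : ∀ r ∈ box, (∀ ℓ, r ≠ rs ℓ) → enorm2 (W *ᵥ atom N P r) < 1) :
    ∀ r ∈ box, enorm2 (W *ᵥ atom N P r) ≤ 1 := by
  intro r hr
  by_cases h : ∃ ℓ, r = rs ℓ
  · obtain ⟨ℓ, rfl⟩ := h
    rw [hinterp, enorm2_smul, norm_csign (hα ℓ), hu, mul_one]
  · exact (hbound r hr fun ℓ hℓ => h ⟨ℓ, hℓ⟩).le

end DBD

theorem dualCertificate_implies_primal_optimality_general
    (N P J : ℕ) (L Q : ℕ)
    (G : Idx N P → Matrix (Idx N P) (Fin J) ℂ)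
    (A : Idx N P → Matrix (Idx N P) (Fin (P * J)) ℂ)
    (α : Fin L → ℂ) (rs : Fin L → ℝ × ℝ) (u : Fin J → ℂ)
    (β : Fin Q → ℂ) (cs : Fin Q → ℝ × ℝ) (w : Fin (P * J) → ℂ)
    (hu : enorm2 u = 1) (hw : enorm2 w = 1)
    (hα : ∀ ℓ, α ℓ ≠ 0) (hβ : ∀ k, β k ≠ 0)
    (hrs : ∀ ℓ, rs ℓ ∈ box) (hcs : ∀ k, cs k ∈ box)
    (Zr : Matrix (Fin J) (Idx N P) ℂ) (Zc : Matrix (Fin (P * J)) (Idx N P) ℂ)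
    (hZr : Zr = ∑ ℓ, α ℓ • atomMat N P u (rs ℓ))
    (hZc : Zc = ∑ k, β k • atomMat N P w (cs k))
    (y : Idx N P → ℂ)
    (hy : y = fun v => aleph N P G Zr v + aleph N P A Zc v)
    (q : Idx N P → ℂ)
    (hfr_interp : ∀ ℓ, (alephAdj N P G q).mulVec (atom N P (rs ℓ)) = csign (α ℓ) • u)
    (hfc_interp : ∀ k, (alephAdj N P A q).mulVec (atom N P (cs k)) = csign (β k) • w)
    (hfr_bound : ∀ r ∈ box, (∀ ℓ, r ≠ rs ℓ) →
      enorm2 ((alephAdj N P G q).mulVec (atom N P r)) < 1)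
    (hfc_bound : ∀ c ∈ box, (∀ k, c ≠ cs k) →
      enorm2 ((alephAdj N P A q).mulVec (atom N P c)) < 1) :
    ∀ (Zr' : Matrix (Fin J) (Idx N P) ℂ) (Zc' : Matrix (Fin (P * J)) (Idx N P) ℂ),
      anorm N P Zr' ≠ ⊤ → anorm N P Zc' ≠ ⊤ →
      (fun v => aleph N P G Zr' v + aleph N P A Zc' v) = y →
      anorm N P Zr + anorm N P Zc ≤ anorm N P Zr' + anorm N P Zc' := by
  intro Zr' Zc' _ _ hfeas
  set Wr := alephAdj N P G q
  set Wc := alephAdj N P A q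
  have hpairing : ((∑ ℓ, ‖α ℓ‖ + ∑ k, ‖β k‖ : ℝ) : ℂ) = finner Wr Zr' + finner Wc Zc' := by
    calc ((∑ ℓ, ‖α ℓ‖ + ∑ k, ‖β k‖ : ℝ) : ℂ) = finner Wr Zr + finner Wc Zc := by
          rw [hZr, hZc, finner_eq_sum_norm_of_interp hu hα hfr_interp,
            finner_eq_sum_norm_of_interp hw hβ hfc_interp, Complex.ofReal_add]
      _ = vinner N P q y := by rw [hy, vinner_add, vinner_aleph, vinner_aleph]
      _ = finner Wr Zr' + finner Wc Zc' := by rw [← hfeas, vinner_add, vinner_aleph, vinner_aleph]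
  have hnonneg {n : ℕ} (c : Fin n → ℂ) : 0 ≤ ∑ i, ‖c i‖ := by positivity
  calc anorm N P Zr + anorm N P Zc
      ≤ ENNReal.ofReal (∑ ℓ, ‖α ℓ‖) + ENNReal.ofReal (∑ k, ‖β k‖) := by
        rw [hZr, hZc]
        exact add_le_add (anorm_sum_smul_atomMat_le hu hrs) (anorm_sum_smul_atomMat_le hw hcs)
    _ = ENNReal.ofReal ((finner Wr Zr').re + (finner Wc Zc').re) := by
        rw [← ENNReal.ofReal_add (hnonneg α) (hnonneg β), ← Complex.add_re, ← hpairing,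
          Complex.ofReal_re]
    _ ≤ ENNReal.ofReal (finner Wr Zr').re + ENNReal.ofReal (finner Wc Zc').re :=
        ENNReal.ofReal_add_le
    _ ≤ anorm N P Zr' + anorm N P Zc' := add_le_add
        (ofReal_re_finner_le_anorm Wr
          (enorm2_mulVec_atom_le_one_of_interp hu hα hfr_interp hfr_bound) Zr')
        (ofReal_re_finner_le_anorm Wc
          (enorm2_mulVec_atom_le_one_of_interp hw hβ hfc_interp hfc_bound) Zc')

/-- **Proposition 1 (dual certificate implies primal optimality).**
If a dual variable `q` generates vector polynomials `f_r(r) = א_r*(q) a(r)` and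
`f_c(c) = א_c*(q) a(c)` that interpolate the signs on the true supports and are
strictly bounded by one elsewhere on `[0,1)²`, then `(Z_r, Z_c)` minimizes
`‖·‖_A + ‖·‖_A` among all feasible pairs for `y = א_r(Z_r) + א_c(Z_c)`. -/
theorem dualCertificate_implies_primal_optimality
    (N P J : ℕ) (hN : 0 < N) (hP : 0 < P) (hJ : 0 < J) (L Q : ℕ)
    (G : Idx N P → Matrix (Idx N P) (Fin J) ℂ)
    (A : Idx N P → Matrix (Idx N P) (Fin (P * J)) ℂ)
    (α : Fin L → ℂ) (rs : Fin L → ℝ × ℝ) (u : Fin J → ℂ)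
    (β : Fin Q → ℂ) (cs : Fin Q → ℝ × ℝ) (w : Fin (P * J) → ℂ)
    (hu : enorm2 u = 1) (hw : enorm2 w = 1)
    (hα : ∀ ℓ, α ℓ ≠ 0) (hβ : ∀ k, β k ≠ 0)
    (hrs : ∀ ℓ, rs ℓ ∈ box) (hcs : ∀ k, cs k ∈ box)
    (hrs_distinct : Function.Injective rs) (hcs_distinct : Function.Injective cs)
    (Zr : Matrix (Fin J) (Idx N P) ℂ) (Zc : Matrix (Fin (P * J)) (Idx N P) ℂ)
    (hZr : Zr = ∑ ℓ, α ℓ • atomMat N P u (rs ℓ))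
    (hZc : Zc = ∑ k, β k • atomMat N P w (cs k))
    (y : Idx N P → ℂ)
    (hy : y = fun v => aleph N P G Zr v + aleph N P A Zc v)
    (q : Idx N P → ℂ)
    (hfr_interp : ∀ ℓ, (alephAdj N P G q).mulVec (atom N P (rs ℓ)) = csign (α ℓ) • u)
    (hfc_interp : ∀ k, (alephAdj N P A q).mulVec (atom N P (cs k)) = csign (β k) • w)
    (hfr_bound : ∀ r ∈ box, (∀ ℓ, r ≠ rs ℓ) →
      enorm2 ((alephAdj N P G q).mulVec (atom N P r)) < 1)
    (hfc_bound : ∀ c ∈ box, (∀ k, c ≠ cs k) →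
      enorm2 ((alephAdj N P A q).mulVec (atom N P c)) < 1) :
    ∀ (Zr' : Matrix (Fin J) (Idx N P) ℂ) (Zc' : Matrix (Fin (P * J)) (Idx N P) ℂ),
      anorm N P Zr' ≠ ⊤ → anorm N P Zc' ≠ ⊤ →
      (fun v => aleph N P G Zr' v + aleph N P A Zc' v) = y →
      anorm N P Zr + anorm N P Zc ≤ anorm N P Zr' + anorm N P Zc' :=
  dualCertificate_implies_primal_optimality_general N P J L Q G A α rs u β cs w hu hw hα hβ hrs hcs
    Zr Zc hZr hZc y hy q hfr_interp hfc_interp hfr_bound hfc_bound
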